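/- For the pseudocaterpillar tree P_n (n ≥ 4), whose root has as children the caterpillar C_{n−2} and a cherry, the number of root ancestral configurations is c(P_n) = 2(n−2) and the number of labeled histories is h(P_n) = n−2. -/

import Mathlib

/-- Binary rooted trees (leaf labels abstracted away; leaves are identified
by their positions, encoded as lists of booleans). -/
inductive BTree : Type
  | leaf : BTree
  | node : BTree → BTree → BTree
  deriving DecidableEq

namespace BTree

/-- A position in a binary tree: a path from the root, `false` = left, `true` = right. -/
abbrev Pos := List Bool

/-- The subtree rooted at a position (junk value `leaf` below a leaf). -/
def subtreeAt : BTree → Pos → BTree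
  | t, [] => t
  | leaf, _ :: _ => leaf
  | node l _, false :: p => subtreeAt l p
  | node _ r, true :: p => subtreeAt r p

/-- `p` is a valid position (node) of the tree. -/
def isValidPos : BTree → Pos → Prop
  | _, [] => True
  | leaf, _ :: _ => False
  | node l _, false :: p => isValidPos l p
  | node _ r, true :: p => isValidPos r p

/-- The set of positions of the leaves of a tree. -/
def leafPositions : BTree → Finset Pos
  | leaf => {([] : Pos)}
  | node l r =>
      (leafPositions l).image (false :: ·) ∪ (leafPositions r).image (true :: ·)

/-- The number of leaves of a tree. -/
def numLeaves (t : BTree) : ℕ := (leafPositions t).card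

/-- The set of positions of the internal (non-leaf) nodes of a tree. -/
def internalPos : BTree → Finset Pos
  | leaf => ∅
  | node l r =>
      insert ([] : Pos)
        ((internalPos l).image (false :: ·) ∪ (internalPos r).image (true :: ·))

/-- A root ancestral configuration of `S`: an antichain of non-root nodes of `S`
whose descendant-leaf sets partition the leaf set, i.e. a set of valid non-root
positions such that every leaf position has exactly one weak ancestor in the set. -/
def IsConfig (S : BTree) (A : Finset Pos) : Prop :=
  (∀ p ∈ A, isValidPos S p ∧ p ≠ []) ∧
  ∀ q ∈ leafPositions S, ∃! p, p ∈ A ∧ p <+: q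

/-- The partial order on configurations: `ConfigLE A B` (that is, `A ≺ B`) iff `B`
is obtained from `A` by coalescing some (possibly no) pairs of lineages;
equivalently, every node of `A` is a weak descendant of some node of `B`. -/
def ConfigLE (A B : Finset Pos) : Prop :=
  ∀ p ∈ A, ∃ q ∈ B, q <+: p

/-- The covering relation on root ancestral configurations of `S`. -/
def Covers (S : BTree) (A B : Finset Pos) : Prop :=
  IsConfig S A ∧ IsConfig S B ∧ ConfigLE A B ∧ A ≠ B ∧
  ∀ C, IsConfig S C → ConfigLE A C → ConfigLE C B → C = A ∨ C = B

/-- The maximal root configuration: the two children of the root. -/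
def rootConfig : Finset Pos := {[false], [true]}

/-- The number of root ancestral configurations of `S`. -/
noncomputable def numConfigs (S : BTree) : ℕ := Nat.card {A : Finset Pos // IsConfig S A}

/-- A labeled history of `S`: a linear ordering of the internal nodes of `S`
in which every internal node appears after all of its internal descendants. -/
def IsLabHist (S : BTree) (L : List Pos) : Prop :=
  L.Nodup ∧ (∀ p, p ∈ L ↔ p ∈ internalPos S) ∧
  ∀ i j : Fin L.length, L.get i <+: L.get j → (j : ℕ) ≤ (i : ℕ)

/-- The number of labeled histories of `S`. -/
noncomputable def numHist (S : BTree) : ℕ := Nat.card {L : List Pos // IsLabHist S L}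

/-- The caterpillar tree on `n` leaves (`caterpillar 1` is a single leaf). -/
def caterpillar : ℕ → BTree
  | 0 => leaf
  | 1 => leaf
  | n + 2 => node (caterpillar (n + 1)) leaf

end BTree

open BTree

/-!
A root configuration of `node l r` is a pair of cuts of `l` and `r`, where a cut of a tree is
either its root alone or one of its root configurations; hence `c(node l r) = (c(l)+1)(c(r)+1)`
and `c(P_n) = (c(C_{n-2}) + 1)(c(cherry) + 1) = (n-2)·2`.

The internal nodes of a caterpillar form a chain, so a caterpillar has a single labeled history.
A labeled history of `node l cherry` is a labeled history of `node l leaf` with the root of the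
cherry inserted anywhere before the last entry, which is the root; for `l = C_{n-2}` this gives
`n - 2` histories.
-/

theorem Function.Injective.existsUnique_iff_of_forall_mem_range {α β : Type*}
    {f : α → β} (hf : Function.Injective f) {P : β → Prop} (hP : ∀ y, P y → y ∈ Set.range f) :
    (∃! y, P y) ↔ ∃! x, P (f x) := by
  constructor
  · rintro ⟨y, hy, huniq⟩
    obtain ⟨x, rfl⟩ := hP y hy
    exact ⟨x, hy, fun x' hx' => hf (huniq _ hx')⟩
  · rintro ⟨x, hx, huniq⟩
    refine ⟨f x, hx, fun y hy => ?_⟩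
    obtain ⟨x', rfl⟩ := hP y hy
    rw [huniq x' hy]

theorem List.Pairwise.nodup_of_not_prefix {α : Type*} {L : List (List α)}
    (h : L.Pairwise fun p q => ¬ p <+: q) : L.Nodup :=
  h.imp fun hne heq => hne (heq ▸ List.prefix_refl _ : _ <+: _)

theorem List.natCard_setOf_exists_append_cons {α : Type*} (D : List α) {x : α} (hx : x ∉ D) :
    Nat.card {L | ∃ s t, s ++ t = D ∧ t ≠ [] ∧ L = s ++ x :: t} = D.length := by
  classical
  have hrange : {L | ∃ s t, s ++ t = D ∧ t ≠ [] ∧ L = s ++ x :: t} =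
      Set.range fun i : Fin D.length => D.take i ++ x :: D.drop i := by
    ext L
    constructor
    · rintro ⟨s, t, rfl, ht, rfl⟩
      exact ⟨⟨s.length, by simp [List.length_pos_iff.mpr ht]⟩, by simp⟩
    · rintro ⟨i, rfl⟩
      exact ⟨_, _, List.take_append_drop _ _, by simp [List.drop_eq_nil_iff], rfl⟩
  have hidx (i : Fin D.length) : (D.take i ++ x :: D.drop i).idxOf x = i := by
    rw [List.idxOf_append_of_notMem fun h => hx (List.mem_of_mem_take h), List.idxOf_cons_self,
      List.length_take]
    omega
  rw [hrange, Nat.card_range_of_injective, Nat.card_eq_fintype_card, Fintype.card_fin]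
  intro i j hij
  exact Fin.ext ((hidx i).symm.trans ((congrArg (List.idxOf x) hij).trans (hidx j)))

namespace BTree

def IsCut (t : BTree) (A : Finset Pos) : Prop :=
  (∀ p ∈ A, isValidPos t p) ∧ ∀ q ∈ leafPositions t, ∃! p, p ∈ A ∧ p <+: q

def joinPos (a b : Finset Pos) : Finset Pos :=
  a.image (false :: ·) ∪ b.image (true :: ·)

section joinPos

variable {a b : Finset Pos}

theorem leafPositions_node (l r : BTree) :
    leafPositions (node l r) = joinPos (leafPositions l) (leafPositions r) := rfl

@[simp]
theorem nil_notMem_joinPos : [] ∉ joinPos a b := by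
  simp [joinPos]

@[simp]
theorem cons_mem_joinPos {c : Bool} {p : Pos} : c :: p ∈ joinPos a b ↔ p ∈ cond c b a := by
  cases c <;> simp [joinPos]

theorem forall_mem_joinPos {P : Pos → Prop} :
    (∀ p ∈ joinPos a b, P p) ↔ (∀ p ∈ a, P (false :: p)) ∧ ∀ p ∈ b, P (true :: p) := by
  simp [joinPos, or_imp, forall_and]

theorem joinPos_injective : Function.Injective (Function.uncurry joinPos) := by
  rintro ⟨a, b⟩ ⟨a', b'⟩ h
  have h (c : Bool) (p : Pos) : p ∈ cond c b a ↔ p ∈ cond c b' a' := by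
    rw [← cons_mem_joinPos, ← cons_mem_joinPos]
    exact Finset.ext_iff.mp h _
  simp only [Prod.mk.injEq, Finset.ext_iff]
  exact ⟨h false, h true⟩

theorem exists_eq_joinPos {A : Finset Pos} (hA : [] ∉ A) : ∃ a b, A = joinPos a b := by
  refine ⟨A.preimage (false :: ·) List.cons_injective.injOn,
    A.preimage (true :: ·) List.cons_injective.injOn, ?_⟩
  ext (_ | ⟨_ | _, p⟩) <;> simp [hA]

theorem existsUnique_prefix_cons_joinPos {c : Bool} {q : Pos} :
    (∃! p, p ∈ joinPos a b ∧ p <+: c :: q) ↔ ∃! p, p ∈ cond c b a ∧ p <+: q := by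
  rw [(List.cons_injective (a := c)).existsUnique_iff_of_forall_mem_range]
  · simp only [cons_mem_joinPos, List.cons_prefix_cons, true_and]
  · rintro p ⟨hp, hpq⟩
    obtain rfl | ⟨p', rfl, -⟩ := List.prefix_cons_iff.mp hpq
    · exact absurd hp nil_notMem_joinPos
    · exact ⟨p', rfl⟩

end joinPos

theorem isValidPos_nil (t : BTree) : isValidPos t [] := by
  cases t <;> trivial

theorem exists_mem_leafPositions_prefix {t : BTree} {p : Pos} (hp : isValidPos t p) :
    ∃ q ∈ leafPositions t, p <+: q := by
  induction t generalizing p with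
  | leaf =>
    cases p with
    | nil => exact ⟨[], by simp [leafPositions], List.prefix_refl _⟩
    | cons => exact hp.elim
  | node l r ihl ihr =>
    rcases p with _ | ⟨_ | _, p⟩
    · obtain ⟨q, hq, -⟩ := ihl (isValidPos_nil l)
      exact ⟨false :: q, by simpa [leafPositions_node] using hq, List.nil_prefix⟩
    · obtain ⟨q, hq, hpq⟩ := ihl hp
      exact ⟨false :: q, by simpa [leafPositions_node] using hq, by simpa using hpq⟩
    · obtain ⟨q, hq, hpq⟩ := ihr hp
      exact ⟨true :: q, by simpa [leafPositions_node] using hq, by simpa using hpq⟩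

theorem isCut_singleton_nil (t : BTree) : IsCut t {[]} :=
  ⟨by simpa using isValidPos_nil t, fun _ _ =>
    ⟨[], ⟨Finset.mem_singleton_self _, List.nil_prefix⟩, fun _ hp => Finset.mem_singleton.mp hp.1⟩⟩

theorem IsCut.eq_singleton_nil {t : BTree} {A : Finset Pos} (hA : IsCut t A) (h : [] ∈ A) :
    A = {[]} := by
  refine Finset.eq_singleton_iff_unique_mem.mpr ⟨h, fun p hp => ?_⟩
  obtain ⟨q, hq, hpq⟩ := exists_mem_leafPositions_prefix (hA.1 p hp)
  exact (hA.2 q hq).unique ⟨hp, hpq⟩ ⟨h, List.nil_prefix⟩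

theorem isConfig_iff_isCut {t : BTree} {A : Finset Pos} : IsConfig t A ↔ IsCut t A ∧ [] ∉ A := by
  simp only [IsConfig, IsCut, forall_and]
  grind

theorem setOf_isCut (t : BTree) : {A | IsCut t A} = insert {[]} {A | IsConfig t A} := by
  ext A
  simp only [Set.mem_insert_iff, Set.mem_ofPred_eq, isConfig_iff_isCut]
  constructor
  · intro h
    by_cases h0 : [] ∈ A
    · exact Or.inl (h.eq_singleton_nil h0)
    · exact Or.inr ⟨h, h0⟩
  · rintro (rfl | ⟨h, -⟩)
    exacts [isCut_singleton_nil t, h]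

theorem isConfig_node_joinPos {l r : BTree} {a b : Finset Pos} :
    IsConfig (node l r) (joinPos a b) ↔ IsCut l a ∧ IsCut r b := by
  simp only [isConfig_iff_isCut, IsCut, leafPositions_node, forall_mem_joinPos,
    existsUnique_prefix_cons_joinPos, isValidPos, nil_notMem_joinPos, not_false_eq_true,
    and_true, cond_false, cond_true]
  tauto

theorem setOf_isConfig_node (l r : BTree) :
    {A | IsConfig (node l r) A} =
      Function.uncurry joinPos '' ({a | IsCut l a} ×ˢ {b | IsCut r b}) := by
  ext A
  constructor
  · intro hA
    obtain ⟨a, b, rfl⟩ := exists_eq_joinPos (isConfig_iff_isCut.mp hA).2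
    exact ⟨(a, b), isConfig_node_joinPos.mp hA, rfl⟩
  · rintro ⟨⟨a, b⟩, hab, rfl⟩
    exact isConfig_node_joinPos.mpr hab

theorem not_isConfig_leaf (A : Finset Pos) : ¬ IsConfig leaf A := by
  rintro ⟨hA, huniq⟩
  obtain ⟨p, ⟨hp, hpq⟩, -⟩ := huniq [] (by simp [leafPositions])
  exact (hA p hp).2 (List.prefix_nil.mp hpq)

theorem finite_setOf_isConfig : ∀ t : BTree, {A | IsConfig t A}.Finite
  | leaf => by simp [not_isConfig_leaf]
  | node l r => by
    rw [setOf_isConfig_node, setOf_isCut, setOf_isCut]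
    exact (((finite_setOf_isConfig l).insert _).prod ((finite_setOf_isConfig r).insert _)).image _

theorem numConfigs_eq_ncard (S : BTree) : numConfigs S = {A | IsConfig S A}.ncard :=
  Nat.card_coe_set_eq _

theorem ncard_setOf_isCut (t : BTree) : {A | IsCut t A}.ncard = numConfigs t + 1 := by
  have h : {([] : Pos)} ∉ {A | IsConfig t A} := fun h =>
    (isConfig_iff_isCut.mp h).2 (Finset.mem_singleton_self _)
  rw [setOf_isCut, Set.ncard_insert_of_notMem h (finite_setOf_isConfig t), numConfigs_eq_ncard]

theorem numConfigs_node (l r : BTree) :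
    numConfigs (node l r) = (numConfigs l + 1) * (numConfigs r + 1) := by
  rw [numConfigs_eq_ncard, setOf_isConfig_node, Set.ncard_image_of_injective _ joinPos_injective,
    Set.ncard_prod, ncard_setOf_isCut, ncard_setOf_isCut]

theorem numConfigs_leaf : numConfigs leaf = 0 := by
  simp [numConfigs_eq_ncard, not_isConfig_leaf]

theorem numConfigs_caterpillar : ∀ k : ℕ, numConfigs (caterpillar (k + 1)) = k
  | 0 => numConfigs_leaf
  | k + 1 => by
    rw [caterpillar, numConfigs_node, numConfigs_caterpillar k, numConfigs_leaf, zero_add, mul_one]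

theorem isLabHist_iff_pairwise {S : BTree} {L : List Pos} :
    IsLabHist S L ↔
      (∀ p, p ∈ L ↔ p ∈ internalPos S) ∧ L.Pairwise fun p q => ¬ p <+: q := by
  have hord : (∀ i j : Fin L.length, L.get i <+: L.get j → (j : ℕ) ≤ i) ↔
      L.Pairwise fun p q => ¬ p <+: q := by
    rw [List.pairwise_iff_get]
    exact ⟨fun h i j hij hpre => absurd (h i j hpre) (not_le.mpr hij),
      fun h i j hpre => not_lt.mp fun hij => h i j hij hpre⟩
  rw [IsLabHist, hord]
  exact ⟨And.right, fun h => ⟨h.2.nodup_of_not_prefix, h⟩⟩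

theorem mem_internalPos_node_leaf {l : BTree} {p : Pos} :
    p ∈ internalPos (node l leaf) ↔ p = [] ∨ ∃ q ∈ internalPos l, p = false :: q := by
  simp [internalPos, eq_comm]

theorem IsLabHist.node_leaf {l : BTree} {M : List Pos} (h : IsLabHist l M) :
    IsLabHist (node l leaf) (M.map (false :: ·) ++ [[]]) := by
  obtain ⟨hmem, hpw⟩ := isLabHist_iff_pairwise.mp h
  refine isLabHist_iff_pairwise.mpr ⟨fun p => ?_, ?_⟩
  · rw [mem_internalPos_node_leaf]
    simp [hmem, eq_comm, or_comm]
  · simpa [List.pairwise_append, List.pairwise_map] using hpw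

def caterpillarHist : ℕ → List Pos
  | 0 => []
  | k + 1 => (caterpillarHist k).map (false :: ·) ++ [[]]

theorem length_caterpillarHist : ∀ k, (caterpillarHist k).length = k
  | 0 => rfl
  | k + 1 => by simp [caterpillarHist, length_caterpillarHist k]

theorem isLabHist_caterpillarHist : ∀ k, IsLabHist (caterpillar (k + 1)) (caterpillarHist k)
  | 0 => isLabHist_iff_pairwise.mpr
    ⟨by simp [caterpillarHist, caterpillar, internalPos], by simp [caterpillarHist]⟩
  | k + 1 => (isLabHist_caterpillarHist k).node_leaf

theorem prefix_replicate_of_mem_internalPos_caterpillar :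
    ∀ {k : ℕ} {p : Pos}, p ∈ internalPos (caterpillar k) → p <+: List.replicate k false
  | 0, _, h | 1, _, h => by simp [caterpillar, internalPos] at h
  | k + 2, p, h => by
    obtain rfl | ⟨q, hq, rfl⟩ := mem_internalPos_node_leaf.mp h
    · exact List.nil_prefix
    · simpa [List.replicate_succ] using prefix_replicate_of_mem_internalPos_caterpillar hq

theorem isLabHist_caterpillar_iff {k : ℕ} {L : List Pos} :
    IsLabHist (caterpillar (k + 1)) L ↔ L = caterpillarHist k := by
  refine ⟨fun hL => ?_, fun h => h ▸ isLabHist_caterpillarHist k⟩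
  have hD := isLabHist_caterpillarHist k
  obtain ⟨hmem, hpw⟩ := isLabHist_iff_pairwise.mp hL
  obtain ⟨hmem', hpw'⟩ := isLabHist_iff_pairwise.mp hD
  refine List.Perm.eq_of_pairwise (fun p q hp hq hpq hqp => ?_) hpw hpw'
    ((List.perm_ext_iff_of_nodup hL.1 hD.1).mpr fun p => (hmem p).trans (hmem' p).symm)
  exact ((List.prefix_or_prefix_of_prefix
    (prefix_replicate_of_mem_internalPos_caterpillar ((hmem p).mp hp))
    (prefix_replicate_of_mem_internalPos_caterpillar ((hmem' q).mp hq))).elim hpq hqp).elim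

theorem isLabHist_node_cherry_iff {l : BTree} {L : List Pos} :
    IsLabHist (node l (node leaf leaf)) L ↔
      ∃ s t, IsLabHist (node l leaf) (s ++ t) ∧ t ≠ [] ∧ L = s ++ [true] :: t := by
  have hmem_cherry (p : Pos) : p ∈ internalPos (node l (node leaf leaf)) ↔
      p = [true] ∨ p ∈ internalPos (node l leaf) := by
    simp [internalPos]
    tauto
  have htrue : [true] ∉ internalPos (node l leaf) := by simp [mem_internalPos_node_leaf]
  simp only [isLabHist_iff_pairwise, hmem_cherry]
  constructor
  · rintro ⟨hmem, hpw⟩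
    obtain ⟨s, t, rfl⟩ := List.append_of_mem ((hmem _).mpr (Or.inl rfl))
    have hnd : [true] ∉ s ++ t := (List.nodup_middle.mp hpw.nodup_of_not_prefix).notMem
    obtain ⟨hs, ⟨-, ht⟩, hst⟩ := List.pairwise_append.mp hpw
    refine ⟨s, t, ⟨fun p => ?_, hpw.sublist ((List.sublist_cons_self _ _).append_left s)⟩,
      ?_, rfl⟩
    · by_cases hp : p = [true]
      · subst hp
        exact iff_of_false hnd htrue
      · simpa [hp] using hmem p
    · rintro rfl
      have hroot : [] ∈ s ++ [[true]] := (hmem []).mpr (Or.inr (by simp [internalPos]))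
      obtain hroot | hroot := List.mem_append.mp hroot
      · exact hst [] hroot [true] List.mem_cons_self List.nil_prefix
      · simp at hroot
  · rintro ⟨s, t, ⟨hmem, hpw⟩, ht, rfl⟩
    obtain ⟨hs, ht', hst⟩ := List.pairwise_append.mp hpw
    have hleft (p : Pos) (hp : p ∈ s ++ t) : ¬ [true] <+: p ∧ (p <+: [true] → p = []) := by
      obtain rfl | ⟨q, -, rfl⟩ := mem_internalPos_node_leaf.mp ((hmem p).mp hp) <;> simp
    refine ⟨fun p => ?_, List.pairwise_append.mpr ⟨hs, List.pairwise_cons.mpr ⟨?_, ht'⟩, ?_⟩⟩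
    · simp only [← hmem, List.mem_append, List.mem_cons]
      tauto
    · exact fun b hb => (hleft b (List.mem_append_right s hb)).1
    · intro a ha b hb
      obtain rfl | hb := List.mem_cons.mp hb
      · intro hpre
        obtain rfl := (hleft a (List.mem_append_left t ha)).2 hpre
        obtain ⟨c, hc⟩ := List.exists_mem_of_ne_nil t ht
        exact hst [] ha c hc List.nil_prefix
      · exact hst a ha b hb

theorem numHist_node_caterpillar_cherry (k : ℕ) :
    numHist (node (caterpillar (k + 1)) (node leaf leaf)) = k + 1 := by
  have htrue : [true] ∉ caterpillarHist (k + 1) := fun h => by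
    simpa [List.replicate_succ] using prefix_replicate_of_mem_internalPos_caterpillar
      (((isLabHist_caterpillarHist (k + 1)).2.1 _).mp h)
  have hsplit : {L | IsLabHist (node (caterpillar (k + 1)) (node leaf leaf)) L} =
      {L | ∃ s t, s ++ t = caterpillarHist (k + 1) ∧ t ≠ [] ∧ L = s ++ [true] :: t} := by
    have hcat (M : List Pos) : IsLabHist (node (caterpillar (k + 1)) leaf) M ↔
        M = caterpillarHist (k + 1) := isLabHist_caterpillar_iff (k := k + 1)
    ext L
    simp only [Set.mem_ofPred_eq, isLabHist_node_cherry_iff, hcat]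
  change Nat.card {L | IsLabHist _ L} = _
  rw [hsplit, List.natCard_setOf_exists_append_cons _ htrue, length_caterpillarHist]

end BTree

/-- For the pseudocaterpillar tree `P_n` (`n ≥ 4`), whose root subtrees are the
caterpillar `C_{n-2}` and a cherry, the number of root ancestral configurations is
`2(n-2)` and the number of labeled histories is `n-2`. -/
theorem pseudocaterpillar_counts (n : ℕ) (hn : 4 ≤ n) :
    numConfigs (node (caterpillar (n - 2)) (node BTree.leaf BTree.leaf)) =
        2 * (n - 2) ∧
    numHist (node (caterpillar (n - 2)) (node BTree.leaf BTree.leaf)) = n - 2 := by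
  obtain ⟨k, hk⟩ : ∃ k, n - 2 = k + 1 := ⟨n - 3, by omega⟩
  rw [hk, numConfigs_node, numConfigs_node, numConfigs_caterpillar, numConfigs_leaf,
    numHist_node_caterpillar_cherry]
  exact ⟨by ring, rfl⟩
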